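/- A simple game G = (N, W) with |N| = n players is weighted if and only if G is α_{n+1}-trade robust, where α_{n+1} is the maximum absolute value of determinants of (n+1)×(n+1) 0–1 matrices. -/

import Mathlib

/-!
A weighted game has no trading transform at all: summing the weights of the `X`'s and of the
`Y`'s gives the same total, while every winning coalition weighs at least the quota and every
losing one less.

Conversely, if `W` is not weighted, no functional is positive on all the vectors `±(1, χ_S)`
(sign `+` for winning `S`), so by Gordan's alternative some nonzero `y`, nonnegative on winning
and nonpositive on losing coalitions, satisfies `∑ y_S (1, χ_S) = 0`. Take `y` of minimal
support: then the kernel of the 0–1 matrix with columns `(1, χ_S)`, `y_S ≠ 0`, is the line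
through `y`. Choosing `k ≤ n + 1` independent rows, among them the all-ones row, the signed
maximal minors of this `k × (k + 1)` matrix form, up to sign, an integer vector `z` that is a
positive multiple of `y`. Its positive part `∑ max(z_S, 0)` is, up to sign, the determinant of
the 0–1 matrix obtained by prepending an indicator row; a 0–1 matrix of size `k + 1` with an
all-ones row has `|det| ≤ α_k ≤ α_{n+1}`. Listing every `S` with multiplicity `max(z_S, 0)`
resp. `max(-z_S, 0)` is the required trading transform.
-/

open Finset

/-- A square real matrix has all entries in {0,1}. -/
def IsZeroOne {k : ℕ} (M : Matrix (Fin k) (Fin k) ℝ) : Prop :=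
  ∀ i j, M i j = 0 ∨ M i j = 1

/-- `alpha k` is the maximum of `|det M|` over k×k 0–1 matrices. -/
noncomputable def alpha (k : ℕ) : ℝ :=
  sSup {x : ℝ | ∃ M : Matrix (Fin k) (Fin k) ℝ, IsZeroOne M ∧ x = |M.det|}

/-- A simple game with player set `Fin n`, given by its set `W` of winning
coalitions, is weighted. -/
def IsWeighted {n : ℕ} (W : Set (Finset (Fin n))) : Prop :=
  ∃ (w : Fin n → ℝ) (q : ℝ), ∀ S : Finset (Fin n), S ∈ W ↔ q ≤ ∑ i ∈ S, w i

/-- `(X; Y)` is a trading transform: every player occurs equally often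
among the `X`'s and among the `Y`'s. -/
def IsTradingTransform {n j : ℕ} (X Y : Fin j → Finset (Fin n)) : Prop :=
  ∀ p : Fin n,
    (Finset.univ.filter fun i => p ∈ X i).card =
    (Finset.univ.filter fun i => p ∈ Y i).card

/-- The game `W` is `k`-trade robust (for a real bound `k`): there is no trading
transform of size `j` with `1 ≤ j ≤ k` turning winning coalitions into losing ones. -/
def TradeRobustUpTo {n : ℕ} (W : Set (Finset (Fin n))) (k : ℝ) : Prop :=
  ¬ ∃ (j : ℕ) (X Y : Fin j → Finset (Fin n)),
      1 ≤ j ∧ (j : ℝ) ≤ k ∧ IsTradingTransform X Y ∧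
      (∀ i, X i ∈ W) ∧ (∀ i, Y i ∉ W)

open Matrix

section ZeroOne

variable {k : ℕ}

lemma bddAbove_abs_det_zeroOne (k : ℕ) :
    BddAbove {x : ℝ | ∃ M : Matrix (Fin k) (Fin k) ℝ, IsZeroOne M ∧ x = |M.det|} := by
  refine ⟨k.factorial, ?_⟩
  rintro _ ⟨M, hM, rfl⟩
  have := det_le (A := M) (abv := AbsoluteValue.abs) (x := 1) fun i j => by
    rcases hM i j with h | h <;> simp [h]
  simpa using this

lemma abs_det_le_alpha {M : Matrix (Fin k) (Fin k) ℝ} (hM : IsZeroOne M) : |M.det| ≤ alpha k :=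
  le_csSup (bddAbove_abs_det_zeroOne k) ⟨M, hM, rfl⟩

lemma alpha_mono : Monotone alpha := by
  intro k l hkl
  obtain ⟨d, rfl⟩ := Nat.exists_eq_add_of_le hkl
  refine csSup_le ⟨_, 0, fun _ _ => Or.inl rfl, rfl⟩ ?_
  rintro _ ⟨M, hM, rfl⟩
  let N : Matrix (Fin (k + d)) (Fin (k + d)) ℝ :=
    reindex finSumFinEquiv finSumFinEquiv (fromBlocks M 0 0 1)
  have hN : IsZeroOne N := by
    intro i j
    simp only [N, reindex_apply, submatrix_apply]
    rcases finSumFinEquiv.symm i with a | a <;> rcases finSumFinEquiv.symm j with b | b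
    · exact hM a b
    · exact Or.inl rfl
    · exact Or.inl rfl
    · by_cases hab : a = b <;> simp [one_apply, hab]
  calc |M.det| = |N.det| := by simp [N]
    _ ≤ alpha (k + d) := abs_det_le_alpha hN

lemma IsZeroOne.exists_det_eq_intCast {M : Matrix (Fin k) (Fin k) ℝ} (hM : IsZeroOne M) :
    ∃ d : ℤ, M.det = d := by
  let N : Matrix (Fin k) (Fin k) ℤ := of fun i j => if M i j = 1 then 1 else 0
  refine ⟨N.det, ?_⟩
  rw [show (N.det : ℝ) = Int.castRingHom ℝ N.det from rfl, RingHom.map_det]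
  congr 1
  ext i j
  rcases hM i j with h | h <;> simp [N, h]

lemma abs_det_le_alpha_of_row_eq_one {M : Matrix (Fin (k + 1)) (Fin (k + 1)) ℝ}
    (hM : IsZeroOne M) {r₀ : Fin (k + 1)} (hr₀ : ∀ j, M r₀ j = 1) : |M.det| ≤ alpha k := by
  -- Subtract row `r₀` from every row starting with a 1 and negate it: the result is again
  -- a 0–1 matrix, its first column is the unit vector at `r₀`, and `|det|` has not changed.
  let c : Fin (k + 1) → ℝ := fun i => if i = r₀ then 0 else -M i 0
  let σ : Fin (k + 1) → ℝ := fun i => if i = r₀ then 1 else 1 - 2 * M i 0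
  let G : Matrix (Fin (k + 1)) (Fin (k + 1)) ℝ := of fun i j => σ i * (M i j + c i * M r₀ j)
  have hG : G.det = (∏ i, σ i) * M.det := by
    rw [show G.det = _ from det_mul_column σ _,
      det_eq_of_forall_row_eq_smul_add_const c r₀ (by simp [c]) fun i j => rfl]
  have hσ : |∏ i, σ i| = 1 := by
    rw [abs_prod]
    refine Finset.prod_eq_one fun i _ => ?_
    by_cases hi : i = r₀
    · simp [σ, hi]
    · rcases hM i 0 with h | h <;> norm_num [σ, hi, h]
  have hG01 : IsZeroOne G := by
    intro i j
    by_cases hi : i = r₀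
    · simp [G, σ, c, hi, hr₀]
    · rcases hM i 0 with h | h <;> rcases hM i j with h' | h' <;> norm_num [G, σ, c, hi, h, h', hr₀]
  have hGcol : ∀ i, G i 0 = if i = r₀ then 1 else 0 := by
    intro i
    by_cases hi : i = r₀
    · simp [G, σ, c, hi, hr₀]
    · rcases hM i 0 with h | h <;> norm_num [G, σ, c, hi, h, hr₀]
  have hexp : G.det = (-1) ^ (r₀ : ℕ) * (G.submatrix r₀.succAbove Fin.succ).det := by
    rw [det_succ_column_zero, Finset.sum_eq_single r₀ (fun i _ hi => by simp [hGcol, hi])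
      (by simp)]
    simp [hGcol]
  calc |M.det| = |G.det| := by rw [hG, abs_mul, hσ, one_mul]
    _ = |(G.submatrix r₀.succAbove Fin.succ).det| := by simp [hexp, abs_mul]
    _ ≤ alpha k := abs_det_le_alpha fun i j => hG01 _ _

end ZeroOne

section Cofactor

variable {k : ℕ}

def cofactorVec {R : Type*} [CommRing R] (C : Matrix (Fin k) (Fin (k + 1)) R) : Fin (k + 1) → R :=
  fun i => (-1) ^ (i : ℕ) * (C.submatrix id i.succAbove).det

lemma det_of_cons_eq_dotProduct_cofactorVec {R : Type*} [CommRing R] (w : Fin (k + 1) → R)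
    (C : Matrix (Fin k) (Fin (k + 1)) R) :
    (of (Fin.cons w C : Fin (k + 1) → Fin (k + 1) → R)).det = w ⬝ᵥ cofactorVec C := by
  rw [det_succ_row_zero, dotProduct]
  refine Finset.sum_congr rfl fun i _ => ?_
  rw [show (of (Fin.cons w C : Fin (k + 1) → Fin (k + 1) → R)).submatrix Fin.succ i.succAbove
    = C.submatrix id i.succAbove from rfl]
  show (-1) ^ (i : ℕ) * w i * _ = w i * ((-1) ^ (i : ℕ) * _)
  ring

lemma mulVec_cofactorVec {R : Type*} [CommRing R] (C : Matrix (Fin k) (Fin (k + 1)) R) :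
    C *ᵥ cofactorVec C = 0 := by
  ext r
  rw [mulVec, ← det_of_cons_eq_dotProduct_cofactorVec]
  exact det_zero_of_row_eq (Fin.succ_ne_zero r).symm rfl

lemma cofactorVec_ne_zero {K : Type*} [Field K] {C : Matrix (Fin k) (Fin (k + 1)) K}
    (hC : LinearIndependent K C) : cofactorVec C ≠ 0 := by
  have hspan : Submodule.span K (Set.range C) < ⊤ := by
    refine Submodule.lt_top_of_finrank_lt_finrank ?_
    rw [finrank_span_eq_card hC]
    simp
  obtain ⟨w, -, hw⟩ := SetLike.exists_of_lt hspan
  have hdet : (of (Fin.cons w C : Fin (k + 1) → Fin (k + 1) → K)).det ≠ 0 :=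
    (isUnit_iff_isUnit_det _).mp (linearIndependent_rows_iff_isUnit.mp
      (linearIndependent_finCons.mpr ⟨hC, hw⟩)) |>.ne_zero
  intro h
  rw [det_of_cons_eq_dotProduct_cofactorVec, h, dotProduct_zero] at hdet
  exact hdet rfl

lemma abs_dotProduct_cofactorVec_le_alpha {C : Matrix (Fin k) (Fin (k + 1)) ℝ}
    (hC : ∀ i j, C i j = 0 ∨ C i j = 1) {r₀ : Fin k} (hr₀ : ∀ j, C r₀ j = 1)
    {w : Fin (k + 1) → ℝ} (hw : ∀ j, w j = 0 ∨ w j = 1) : |w ⬝ᵥ cofactorVec C| ≤ alpha k := by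
  rw [← det_of_cons_eq_dotProduct_cofactorVec]
  refine abs_det_le_alpha_of_row_eq_one (fun i j => ?_) (r₀ := r₀.succ) hr₀
  cases i using Fin.cases with
  | zero => exact hw j
  | succ i => exact hC i j

lemma exists_cofactorVec_eq_intCast {C : Matrix (Fin k) (Fin (k + 1)) ℝ}
    (hC : ∀ i j, C i j = 0 ∨ C i j = 1) (i : Fin (k + 1)) : ∃ d : ℤ, cofactorVec C i = d := by
  obtain ⟨d, hd⟩ := IsZeroOne.exists_det_eq_intCast (M := C.submatrix id i.succAbove)
    fun _ _ => hC _ _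
  exact ⟨(-1) ^ (i : ℕ) * d, by simp [cofactorVec, hd]⟩

end Cofactor

section RowBasis

variable {K m κ : Type*} [Field K] [Fintype m] [Fintype κ]

lemma exists_linearIndependent_rows_ker_le (A : Matrix m κ K) {r₀ : m} (hr₀ : A r₀ ≠ 0) :
    ∃ (k : ℕ) (e : Fin k → m), k ≤ Fintype.card m ∧ r₀ ∈ Set.range e ∧
      LinearIndependent K (A.submatrix e id) ∧ ∀ x, A.submatrix e id *ᵥ x = 0 → A *ᵥ x = 0 := by
  classical
  obtain ⟨b, -, hr₀b, hspan, hli⟩ :=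
    exists_linearIndepOn_extension (K := K) (LinearIndepOn.singleton hr₀) (Set.subset_univ {r₀})
  let eb := (Fintype.equivFin b).symm
  refine ⟨Fintype.card b, Subtype.val ∘ eb, Fintype.card_subtype_le _,
    ⟨eb.symm ⟨r₀, hr₀b rfl⟩, by simp⟩, hli.comp _ eb.injective, fun x hx => ?_⟩
  suffices h : ∀ u ∈ Submodule.span K (A '' b), u ⬝ᵥ x = 0 from
    funext fun r => h _ (hspan ⟨r, trivial, rfl⟩)
  intro u hu
  induction hu using Submodule.span_induction with
  | mem u hu =>
    obtain ⟨r, hr, rfl⟩ := hu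
    simpa [eb, mulVec] using congrFun hx (eb.symm ⟨r, hr⟩)
  | zero => exact zero_dotProduct x
  | add u v _ _ hu hv => rw [add_dotProduct, hu, hv, add_zero]
  | smul a u _ hu => rw [smul_dotProduct, hu, smul_zero]

lemma card_eq_add_finrank_ker {k : ℕ} {C : Matrix (Fin k) κ K} (hC : LinearIndependent K C) :
    Fintype.card κ = k + Module.finrank K (LinearMap.ker C.mulVecLin) := by
  have hrank : C.rank = k := by
    rw [rank_eq_finrank_span_row, row, finrank_span_eq_card hC, Fintype.card_fin]
  rw [← Module.finrank_fintype_fun_eq_card K, ← LinearMap.finrank_range_add_finrank_ker C.mulVecLin]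
  exact congrArg (· + _) hrank

end RowBasis

lemma sum_toNat_le_of_abs_dotProduct_le {ι : Type*} [Fintype ι] {d : ι → ℤ} {B : ℝ}
    (h : ∀ w : ι → ℝ, (∀ i, w i = 0 ∨ w i = 1) → |w ⬝ᵥ fun i => (d i : ℝ)| ≤ B) :
    ((∑ i, (d i).toNat : ℕ) : ℝ) ≤ B := by
  let w : ι → ℝ := fun i => if 0 < d i then 1 else 0
  have hsum : ((∑ i, (d i).toNat : ℕ) : ℝ) = w ⬝ᵥ fun i => (d i : ℝ) := by
    rw [Nat.cast_sum]
    refine Finset.sum_congr rfl fun i _ => ?_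
    by_cases hi : 0 < d i
    · simp only [w, hi, if_true, one_mul]
      exact_mod_cast Int.toNat_of_nonneg hi.le
    · simp [w, hi, Int.toNat_eq_zero.mpr (not_lt.mp hi)]
  rw [hsum]
  exact (le_abs_self _).trans (h w fun i => by by_cases hi : 0 < d i <;> simp [w, hi])

theorem exists_int_eq_smul_of_linearIndependent_rows {k : ℕ}
    {C : Matrix (Fin k) (Fin (k + 1)) ℝ} (hC : ∀ i j, C i j = 0 ∨ C i j = 1) {r₀ : Fin k}
    (hr₀ : ∀ j, C r₀ j = 1) (hli : LinearIndependent ℝ C) {y : Fin (k + 1) → ℝ}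
    (hker : ∀ x, C *ᵥ x = 0 → x ∈ ℝ ∙ y) :
    ∃ (z : Fin (k + 1) → ℤ) (c : ℝ), 0 < c ∧ (fun i => (z i : ℝ)) = c • y ∧
      ((∑ i, (z i).toNat : ℕ) : ℝ) ≤ alpha k := by
  obtain ⟨t, ht⟩ := Submodule.mem_span_singleton.mp (hker _ (mulVec_cofactorVec C))
  have ht0 : t ≠ 0 := by
    rintro rfl
    exact cofactorVec_ne_zero hli (by rw [← ht, zero_smul])
  choose d hd using exists_cofactorVec_eq_intCast hC
  have hbound : ∀ w : Fin (k + 1) → ℝ, (∀ i, w i = 0 ∨ w i = 1) →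
      |w ⬝ᵥ fun i => (d i : ℝ)| ≤ alpha k := fun w hw => by
    simpa [← hd] using abs_dotProduct_cofactorVec_le_alpha hC hr₀ hw
  obtain ⟨ε, hε, hεt⟩ : ∃ ε : ℤ, |(ε : ℝ)| = 1 ∧ 0 < ε * t := ht0.lt_or_gt.elim
    (fun h => ⟨-1, by simp, by simpa using h⟩) fun h => ⟨1, by simp, by simpa using h⟩
  refine ⟨fun i => ε * d i, ε * t, hεt, funext fun i => ?_,
    sum_toNat_le_of_abs_dotProduct_le fun w hw => ?_⟩
  · simp [← hd, ← ht, mul_assoc]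
  · rw [show (fun i => ((ε * d i : ℤ) : ℝ)) = (ε : ℝ) • fun i => (d i : ℝ) by ext; simp,
      dotProduct_smul, smul_eq_mul, abs_mul, hε, one_mul]
    exact hbound w hw

theorem exists_int_eq_smul_of_ker_eq_span {m κ : Type*} [Fintype m] [Fintype κ]
    {A : Matrix m κ ℝ} (hA : ∀ i j, A i j = 0 ∨ A i j = 1) {r₀ : m} (hr₀ : ∀ j, A r₀ j = 1)
    {y : κ → ℝ} (hy : y ≠ 0) (hker : LinearMap.ker A.mulVecLin = ℝ ∙ y) :
    ∃ (z : κ → ℤ) (c : ℝ), 0 < c ∧ (fun i => (z i : ℝ)) = c • y ∧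
      ((∑ i, (z i).toNat : ℕ) : ℝ) ≤ alpha (Fintype.card m) := by
  have hA₀ : A r₀ ≠ 0 := by
    obtain ⟨j, -⟩ := Function.ne_iff.mp hy
    exact fun h => by simpa [hr₀] using congrFun h j
  obtain ⟨k, e, hk, ⟨i₀, hi₀⟩, hli, hle⟩ := exists_linearIndependent_rows_ker_le A hA₀
  have hker₀ : LinearMap.ker (A.submatrix e id).mulVecLin = ℝ ∙ y := by
    rw [← hker]
    ext x
    exact ⟨hle x, fun h => funext fun i => congrFun h (e i)⟩
  have hcard : Fintype.card κ = k + 1 := by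
    rw [card_eq_add_finrank_ker hli, hker₀, finrank_span_singleton hy]
  let eκ : Fin (k + 1) ≃ κ := (Fintype.equivFinOfCardEq hcard).symm
  obtain ⟨z, c, hc, hz, hsum⟩ := exists_int_eq_smul_of_linearIndependent_rows
    (C := A.submatrix e eκ) (fun _ _ => hA _ _) (r₀ := i₀) (fun j => by simp [hi₀, hr₀])
    (hli.map' (LinearEquiv.funCongrLeft ℝ ℝ eκ).toLinearMap (LinearEquiv.ker _))
    (y := y ∘ eκ) fun x hx => by
      rw [submatrix_mulVec_equiv] at hx
      obtain ⟨t, ht⟩ := Submodule.mem_span_singleton.mp (hker₀ ▸ hx : x ∘ eκ.symm ∈ ℝ ∙ y)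
      exact Submodule.mem_span_singleton.mpr ⟨t, funext fun i => by simpa using congrFun ht (eκ i)⟩
  refine ⟨z ∘ eκ.symm, c, hc, funext fun i => by simpa using congrFun hz (eκ.symm i), ?_⟩
  rw [← Equiv.sum_comp eκ]
  simpa using hsum.trans (alpha_mono hk)

lemma sum_dite_eq_sum_subtype {ι M : Type*} [Fintype ι] [AddCommMonoid M] (p : ι → Prop)
    [DecidablePred p] (f : Subtype p → M) :
    ∑ i, (if h : p i then f ⟨i, h⟩ else 0) = ∑ i, f i := by
  rw [← Fintype.sum_subtype_add_sum_subtype p]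
  simp [Finset.sum_congr rfl fun (i : {i // ¬ p i}) _ => dif_neg i.2, fun i : Subtype p => i.2]

theorem exists_int_eq_smul_of_support_minimal {m κ : Type*} [Fintype m] [Fintype κ]
    {A : Matrix m κ ℝ} (hA : ∀ i j, A i j = 0 ∨ A i j = 1) {r₀ : m} (hr₀ : ∀ j, A r₀ j = 1)
    {y : κ → ℝ} (hy : y ≠ 0) (hyA : A *ᵥ y = 0)
    (hmin : ∀ x, A *ᵥ x = 0 → (∀ i, y i = 0 → x i = 0) → x ∈ ℝ ∙ y) :
    ∃ (z : κ → ℤ) (c : ℝ), 0 < c ∧ (fun i => (z i : ℝ)) = c • y ∧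
      ((∑ i, (z i).toNat : ℕ) : ℝ) ≤ alpha (Fintype.card m) := by
  classical
  let A' : Matrix m {i // y i ≠ 0} ℝ := A.submatrix id Subtype.val
  let extend : ({i // y i ≠ 0} → ℝ) → κ → ℝ := fun x i => if h : y i ≠ 0 then x ⟨i, h⟩ else 0
  have hA' : ∀ x, A' *ᵥ x = A *ᵥ extend x := fun x => funext fun r => by
    simp only [A', extend, mulVec, dotProduct, submatrix_apply, id, mul_dite, mul_zero]
    exact (sum_dite_eq_sum_subtype _ fun i => A r i * x i).symm
  have hy' : y = extend (y ∘ Subtype.val) := funext fun i => by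
    by_cases h : y i = 0 <;> simp [extend, h]
  have hker : LinearMap.ker A'.mulVecLin = ℝ ∙ (y ∘ Subtype.val) := by
    refine le_antisymm (fun x hx => ?_) ?_
    · rw [LinearMap.mem_ker, mulVecLin_apply, hA'] at hx
      obtain ⟨t, ht⟩ := Submodule.mem_span_singleton.mp
        (hmin _ hx fun i hi => by simp [extend, hi])
      exact Submodule.mem_span_singleton.mpr ⟨t, funext fun i => by
        simpa [extend, i.2] using congrFun ht i⟩
    · rw [Submodule.span_singleton_le_iff_mem, LinearMap.mem_ker, mulVecLin_apply, hA', ← hy',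
        hyA]
  obtain ⟨z, c, hc, hz, hsum⟩ := exists_int_eq_smul_of_ker_eq_span (A := A') (fun _ _ => hA _ _)
    (fun _ => hr₀ _) (fun h => hy (by rw [hy', h]; exact funext fun i => by simp [extend])) hker
  refine ⟨fun i => if h : y i ≠ 0 then z ⟨i, h⟩ else 0, c, hc, funext fun i => ?_, ?_⟩
  · by_cases h : y i = 0
    · simp [h]
    · simpa [h] using congrFun hz ⟨i, h⟩
  · convert hsum using 2
    simp only [apply_dite Int.toNat, Int.toNat_zero]
    exact sum_dite_eq_sum_subtype _ fun i => (z i).toNat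

theorem exists_strongDual_pos_or_exists_stdSimplex_sum_smul_eq_zero {E ι : Type*}
    [AddCommGroup E] [TopologicalSpace E] [T2Space E] [IsTopologicalAddGroup E] [Module ℝ E]
    [ContinuousSMul ℝ E] [LocallyConvexSpace ℝ E] [Fintype ι] (v : ι → E) :
    (∃ f : StrongDual ℝ E, ∀ i, 0 < f (v i)) ∨ ∃ c ∈ stdSimplex ℝ ι, ∑ i, c i • v i = 0 := by
  classical
  let L := Fintype.linearCombination ℝ v
  by_cases h : (0 : E) ∈ L '' stdSimplex ℝ ι
  · obtain ⟨c, hc, hc0⟩ := h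
    exact Or.inr ⟨c, hc, by rwa [Fintype.linearCombination_apply] at hc0⟩
  · have hK : IsCompact (L '' stdSimplex ℝ ι) :=
      (isCompact_stdSimplex ℝ ι).image (LinearMap.continuous_on_pi L)
    obtain ⟨f, u, hu, hf⟩ :=
      geometric_hahn_banach_point_closed ((convex_stdSimplex ℝ ι).linear_image L) hK.isClosed h
    refine Or.inl ⟨f, fun i => ?_⟩
    have := hf (v i) ⟨Pi.single i 1, single_mem_stdSimplex ℝ i, by simp [L]⟩
    rw [map_zero] at hu
    linarith

def SignCompatible {ι : Type*} (P : Set ι) (y : ι → ℝ) : Prop :=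
  ∀ i, (i ∈ P → 0 ≤ y i) ∧ (i ∉ P → y i ≤ 0)

lemma SignCompatible.sub {ι : Type*} {P : Set ι} {y d : ι → ℝ} (hy : SignCompatible P y)
    (hd : ∀ i, |d i| ≤ |y i|) : SignCompatible P (y - d) := by
  intro i
  refine ⟨fun hi => ?_, fun hi => ?_⟩
  · have h0 := (hy i).1 hi
    linarith [le_abs_self (d i), (hd i).trans_eq (abs_of_nonneg h0), Pi.sub_apply y d i]
  · have h0 := (hy i).2 hi
    linarith [neg_abs_le (d i), (hd i).trans_eq (abs_of_nonpos h0), Pi.sub_apply y d i]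

theorem SignCompatible.exists_support_minimal {ι : Type*} [Fintype ι]
    {V : Submodule ℝ (ι → ℝ)} {P : Set ι} {y₀ : ι → ℝ} (hy₀ : SignCompatible P y₀)
    (hV : y₀ ∈ V) (hne : y₀ ≠ 0) :
    ∃ y ∈ V, y ≠ 0 ∧ SignCompatible P y ∧ ∀ x ∈ V, (∀ i, y i = 0 → x i = 0) → x ∈ ℝ ∙ y := by
  classical
  obtain ⟨y, ⟨hyV, hy0, hy⟩, hmin⟩ := (measure fun y : ι → ℝ => #{i | y i ≠ 0}).wf.has_min
    {y | y ∈ V ∧ y ≠ 0 ∧ SignCompatible P y} ⟨y₀, hV, hne, hy₀⟩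
  refine ⟨y, hyV, hy0, hy, fun x hxV hxy => ?_⟩
  by_cases hx0 : x = 0
  · rw [hx0]
    exact zero_mem _
  -- Subtract the largest multiple of `x` that keeps the signs of `y`: it kills a coordinate.
  obtain ⟨i₀, hi₀, hi₀min⟩ := Finset.exists_min_image {i | x i ≠ 0} (fun i => |y i / x i|)
    (by simpa [Finset.filter_nonempty_iff] using Function.ne_iff.mp hx0)
  rw [Finset.mem_filter] at hi₀
  let t := y i₀ / x i₀
  have hle : ∀ i, |(t • x) i| ≤ |y i| := by
    intro i
    by_cases hi : x i = 0
    · simp [hi]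
    rw [Pi.smul_apply, smul_eq_mul, abs_mul]
    calc |t| * |x i| ≤ |y i / x i| * |x i| :=
          mul_le_mul_of_nonneg_right (hi₀min i (by simpa using hi)) (abs_nonneg _)
      _ = |y i| := by rw [abs_div, div_mul_cancel₀ _ (abs_ne_zero.mpr hi)]
  have hyx : y = t • x := by
    rw [← sub_eq_zero]
    by_contra hz
    refine hmin (y - t • x) ⟨V.sub_mem hyV (V.smul_mem t hxV), hz, hy.sub hle⟩
      (Finset.card_lt_card ((Finset.ssubset_iff_of_subset fun i => ?_).mpr ⟨i₀, ?_⟩))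
    · simp only [Finset.mem_filter, Finset.mem_univ, true_and, Pi.sub_apply]
      exact fun h hyi => h (by simp [hyi, hxy i hyi])
    · simpa [t, div_mul_cancel₀ _ hi₀.2] using fun h => hi₀.2 (hxy i₀ h)
  have ht : t ≠ 0 := fun h => hy0 (by rw [hyx, h, zero_smul])
  exact Submodule.mem_span_singleton.mpr ⟨t⁻¹, by rw [hyx, smul_smul, inv_mul_cancel₀ ht, one_smul]⟩

section Game

variable {n : ℕ}

def coalitionMatrix (n : ℕ) : Matrix (Option (Fin n)) (Finset (Fin n)) ℝ :=
  of fun o S => o.elim 1 fun p => if p ∈ S then 1 else 0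

lemma coalitionMatrix_zero_or_one : ∀ o S, coalitionMatrix n o S = 0 ∨ coalitionMatrix n o S = 1
  | none, _ => Or.inr rfl
  | some p, S => by by_cases h : p ∈ S <;> simp [coalitionMatrix, h]

lemma coalitionMatrix_transpose_apply (S : Finset (Fin n)) :
    (coalitionMatrix n)ᵀ S = Pi.single none 1 + ∑ p ∈ S, Pi.single (some p) 1 := by
  ext (_ | p) <;> simp [coalitionMatrix, Finset.sum_apply, Pi.single_apply]

theorem exists_signCompatible_mulVec_eq_zero_of_not_isWeighted {W : Set (Finset (Fin n))}
    (hW : ¬IsWeighted W) : ∃ y, coalitionMatrix n *ᵥ y = 0 ∧ y ≠ 0 ∧ SignCompatible W y := by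
  classical
  let ε : Finset (Fin n) → ℝ := fun S => if S ∈ W then 1 else -1
  rcases exists_strongDual_pos_or_exists_stdSimplex_sum_smul_eq_zero
    fun S => ε S • (coalitionMatrix n)ᵀ S with ⟨f, hf⟩ | ⟨c, ⟨hc0, hc1⟩, hc⟩
  · refine absurd ⟨fun p => f (Pi.single (some p) 1), -f (Pi.single none 1), fun S => ?_⟩ hW
    have := hf S
    simp only [map_smul, coalitionMatrix_transpose_apply, map_add, map_sum, smul_eq_mul] at this
    by_cases hS : S ∈ W <;> simp [ε, hS] at this ⊢ <;> linarith
  · refine ⟨fun S => ε S * c S, ?_, fun h => ?_, fun S => ?_⟩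
    · ext o
      simpa [mulVec, dotProduct, Finset.sum_apply, mul_comm, mul_left_comm] using congrFun hc o
    · obtain ⟨S, -, hS⟩ := Finset.exists_ne_zero_of_sum_ne_zero (hc1.symm ▸ one_ne_zero)
      have := congrFun h S
      by_cases hSW : S ∈ W <;> simp [ε, hSW, hS] at this
    · by_cases hS : S ∈ W <;> simp [ε, hS, hc0 S]

theorem exists_int_certificate_of_not_isWeighted {W : Set (Finset (Fin n))}
    (hW : ¬IsWeighted W) :
    ∃ z : Finset (Fin n) → ℤ, z ≠ 0 ∧ (∀ S, 0 < z S → S ∈ W) ∧ (∀ S, z S < 0 → S ∉ W) ∧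
      ∑ S, z S = 0 ∧ (∀ p, ∑ S with p ∈ S, z S = 0) ∧
      ((∑ S, (z S).toNat : ℕ) : ℝ) ≤ alpha (n + 1) := by
  obtain ⟨y₀, hy₀A, hy₀0, hy₀W⟩ := exists_signCompatible_mulVec_eq_zero_of_not_isWeighted hW
  obtain ⟨y, hyA, hy0, hyW, hmin⟩ :=
    hy₀W.exists_support_minimal (V := LinearMap.ker (coalitionMatrix n).mulVecLin) hy₀A hy₀0
  obtain ⟨z, c, hc, hz, hsize⟩ := exists_int_eq_smul_of_support_minimal
    coalitionMatrix_zero_or_one (r₀ := none) (fun _ => rfl) hy0 hyA fun x hx => hmin x hx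
  have hzy : ∀ S, (z S : ℝ) = c * y S := fun S => congrFun hz S
  have hzA : coalitionMatrix n *ᵥ (fun S => (z S : ℝ)) = 0 := by
    rw [hz, mulVec_smul, show coalitionMatrix n *ᵥ y = 0 from hyA, smul_zero]
  refine ⟨z, fun h => hy0 (funext fun S => ?_), fun S hS => ?_, fun S hS => ?_, ?_, fun p => ?_,
    by simpa using hsize⟩
  · simpa [h, hc.ne'] using hzy S
  · by_contra hSW
    have : (0 : ℝ) < c * y S := by rw [← hzy]; exact_mod_cast hS
    nlinarith [(hyW S).2 hSW]
  · intro hSW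
    have : c * y S < 0 := by rw [← hzy]; exact_mod_cast hS
    nlinarith [(hyW S).1 hSW]
  · have := congrFun hzA none
    simp only [coalitionMatrix, mulVec, dotProduct, of_apply, Option.elim_none, one_mul,
      Pi.zero_apply] at this
    exact_mod_cast this
  · have := congrFun hzA (some p)
    simp only [coalitionMatrix, mulVec, dotProduct, of_apply, Option.elim_some, ite_mul, one_mul,
      zero_mul, ← Finset.sum_filter, Pi.zero_apply] at this
    exact_mod_cast this

end Game

section Trading

variable {n : ℕ}

lemma IsTradingTransform.sum_sum_eq {j : ℕ} {X Y : Fin j → Finset (Fin n)}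
    (h : IsTradingTransform X Y) (w : Fin n → ℝ) :
    ∑ i, ∑ p ∈ X i, w p = ∑ i, ∑ p ∈ Y i, w p := by
  have hcount : ∀ Z : Fin j → Finset (Fin n),
      ∑ i, ∑ p ∈ Z i, w p = ∑ p, #{i | p ∈ Z i} • w p := fun Z => by
    simp_rw [Finset.card_filter, Finset.sum_smul, ite_smul, one_smul, zero_smul]
    rw [Finset.sum_comm]
    simp [Finset.sum_ite_mem]
  rw [hcount X, hcount Y]
  simp_rw [h _]

theorem IsWeighted.tradeRobustUpTo {W : Set (Finset (Fin n))} (hW : IsWeighted W) (k : ℝ) :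
    TradeRobustUpTo W k := by
  rintro ⟨j, X, Y, hj, -, hXY, hX, hY⟩
  obtain ⟨w, q, hw⟩ := hW
  have hne : (Finset.univ : Finset (Fin j)).Nonempty := Finset.univ_nonempty_iff.mpr ⟨⟨0, hj⟩⟩
  have hXq : ∑ _i : Fin j, q ≤ ∑ i, ∑ p ∈ X i, w p :=
    Finset.sum_le_sum fun i _ => (hw _).mp (hX i)
  have hYq : ∑ i, ∑ p ∈ Y i, w p < ∑ _i : Fin j, q :=
    Finset.sum_lt_sum_of_nonempty hne fun i _ => not_le.mp ((hw _).not.mp (hY i))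
  linarith [hXY.sum_sum_eq w]

lemma sum_toNat_eq_sum_toNat_neg {ι : Type*} {s : Finset ι} {z : ι → ℤ}
    (h : ∑ i ∈ s, z i = 0) : ∑ i ∈ s, (z i).toNat = ∑ i ∈ s, (-z i).toNat := by
  have : ∑ i ∈ s, (((z i).toNat : ℤ) - ((-z i).toNat : ℤ)) = 0 := by
    simpa only [Int.toNat_sub_toNat_neg] using h
  rw [Finset.sum_sub_distrib, sub_eq_zero] at this
  exact_mod_cast this

lemma one_le_sum_toNat {ι : Type*} [Fintype ι] {z : ι → ℤ} (hz : z ≠ 0) (h : ∑ i, z i = 0) :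
    1 ≤ ∑ i, (z i).toNat := by
  by_contra! h0
  have hpos := Finset.sum_eq_zero_iff.mp (Nat.lt_one_iff.mp h0)
  have hneg := Finset.sum_eq_zero_iff.mp ((sum_toNat_eq_sum_toNat_neg h).symm.trans
    (Nat.lt_one_iff.mp h0))
  exact hz (funext fun i => by
    rw [← Int.toNat_sub_toNat_neg (z i), hpos i (Finset.mem_univ _), hneg i (Finset.mem_univ _)]
    rfl)

lemma card_filter_sigma_fst {ι : Type*} [Fintype ι] (m : ι → ℕ) (P : ι → Prop)
    [DecidablePred P] : #{x : (i : ι) × Fin (m i) | P x.1} = ∑ i with P i, m i := by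
  rw [Finset.card_filter, Fintype.sum_sigma, Finset.sum_filter]
  exact Finset.sum_congr rfl fun i _ => by split_ifs <;> simp

theorem exists_isTradingTransform {z : Finset (Fin n) → ℤ} (hsum : ∑ S, z S = 0)
    (hbal : ∀ p, ∑ S with p ∈ S, z S = 0) :
    ∃ X Y : Fin (∑ S, (z S).toNat) → Finset (Fin n),
      IsTradingTransform X Y ∧ (∀ i, 0 < z (X i)) ∧ ∀ i, z (Y i) < 0 := by
  let eX := Fintype.equivFinOfCardEq (α := (S : Finset (Fin n)) × Fin (z S).toNat)
    (n := ∑ S, (z S).toNat)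
    (by simp [Fintype.card_sigma])
  let eY := Fintype.equivFinOfCardEq (α := (S : Finset (Fin n)) × Fin (-z S).toNat)
    (n := ∑ S, (z S).toNat)
    (by simp [Fintype.card_sigma, sum_toNat_eq_sum_toNat_neg hsum])
  refine ⟨fun i => (eX.symm i).1, fun i => (eY.symm i).1, fun p => ?_,
    fun i => Int.lt_toNat.mp (eX.symm i).2.pos, fun i => ?_⟩
  · rw [Finset.card_equiv eX.symm (t := {x | p ∈ x.1}) (by simp),
      Finset.card_equiv eY.symm (t := {x | p ∈ x.1}) (by simp),
      card_filter_sigma_fst _ (p ∈ ·), card_filter_sigma_fst _ (p ∈ ·),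
      sum_toNat_eq_sum_toNat_neg (hbal p)]
  · simpa using Int.lt_toNat.mp (eY.symm i).2.pos

end Trading

theorem stmt_5 {n : ℕ} (W : Set (Finset (Fin n))) :
    IsWeighted W ↔ TradeRobustUpTo W (alpha (n + 1)) := by
  refine ⟨fun hW => hW.tradeRobustUpTo _, fun hrob => by_contra fun hW => hrob ?_⟩
  obtain ⟨z, hz0, hzW, hzL, hsum, hbal, hsize⟩ := exists_int_certificate_of_not_isWeighted hW
  obtain ⟨X, Y, hXY, hX, hY⟩ := exists_isTradingTransform hsum hbal
  exact ⟨_, X, Y, one_le_sum_toNat hz0 hsum, hsize, hXY, fun i => hzW _ (hX i),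
    fun i => hzL _ (hY i)⟩
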